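/- arXiv:2206.11016 — 3 statements merged into one kernel-verified Lean document; each statement's English description precedes it below -/
import Mathlib

section
/- For every index j ∈ {1,…,n} one has Σ_{i ≠ j} a_{ij} = 0, and for every j and every x ∈ ℝⁿ one has Σ_{i ≠ j} b_{ij}(x) = 0. -/
/-- Trace identities for the coefficients `a_{ij}` and `b_{ij}(x)` appearing in the
expansion of the deformed Weyl tensor under Aubin's deformation:
`Σ_{i ≠ j} a_{ij} = 0` and `Σ_{i ≠ j} b_{ij}(x) = 0` for every `j` and `x`. -/
theorem aubin_weyl_coefficients_trace_free
    (n : ℕ) (hn : 4 ≤ n) (r : ℝ) (hr : 0 < r) (α : Fin n → ℝ)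
    (a : Fin n → Fin n → ℝ)
    (ha : ∀ i j, a i j =
      1 / ((n : ℝ) - 2) *
        (((n : ℝ) - 4) * α i * α j -
          (α i + α j) * (∑ k ∈ Finset.univ \ {i, j}, α k) +
          2 / ((n : ℝ) - 1) *
            ∑ k : Fin n, ∑ l : Fin n, if k < l then α k * α l else 0))
    (b : Fin n → Fin n → (Fin n → ℝ) → ℝ)
    (hb : ∀ i j x, b i j x =
      2 / (((n : ℝ) - 2) * r ^ 2) *
        (((n : ℝ) - 4) * (α i * x i ^ 2 + α j * x j ^ 2) * α i * α j -
          (α i ^ 2 * x i ^ 2 + α j ^ 2 * x j ^ 2) *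
            (∑ k ∈ Finset.univ \ {i, j}, α k) -
          (α i + α j) * (∑ k ∈ Finset.univ \ {i, j}, α k ^ 2 * x k ^ 2) +
          2 / ((n : ℝ) - 1) *
            ∑ k : Fin n, α k * ∑ l ∈ Finset.univ \ {k}, α l ^ 2 * x l ^ 2)) :
    (∀ j : Fin n, ∑ i ∈ Finset.univ \ {j}, a i j = 0) ∧
    (∀ (j : Fin n) (x : Fin n → ℝ), ∑ i ∈ Finset.univ \ {j}, b i j x = 0) := by
  have hn4 : (4 : ℝ) ≤ (n : ℝ) := by exact_mod_cast hn
  have hn1 : ((n : ℝ) - 1) ≠ 0 := by linarith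
  have hn2 : ((n : ℝ) - 2) ≠ 0 := by linarith
  have hrr : ((n : ℝ) - 2) * r ^ 2 ≠ 0 := mul_ne_zero hn2 (pow_ne_zero _ hr.ne')
  have hsub1 : ∀ (f : Fin n → ℝ) (j : Fin n),
      ∑ k ∈ Finset.univ \ {j}, f k = (∑ k, f k) - f j := by
    intro f j
    rw [Finset.sum_sdiff_eq_sub (Finset.subset_univ _), Finset.sum_singleton]
  have hsub2 : ∀ (f : Fin n → ℝ) (i j : Fin n), i ≠ j →
      ∑ k ∈ Finset.univ \ {i, j}, f k = (∑ k, f k) - f i - f j := by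
    intro f i j hij
    rw [Finset.sum_sdiff_eq_sub (Finset.subset_univ _), Finset.sum_pair hij]
    ring
  have hcard : ∀ j : Fin n, (((Finset.univ \ {j} : Finset (Fin n))).card : ℝ) = (n : ℝ) - 1 := by
    intro j
    rw [Finset.card_sdiff_of_subset (Finset.subset_univ _), Finset.card_singleton, Finset.card_univ,
      Fintype.card_fin, Nat.cast_sub (by omega : 1 ≤ n)]
    simp
  -- off-diagonal pair sum
  have hP : 2 * (∑ k : Fin n, ∑ l : Fin n, if k < l then α k * α l else 0)
      = (∑ k, α k) ^ 2 - (∑ k, α k ^ 2) := by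
    have expand : (∑ k, α k) ^ 2 = ∑ k : Fin n, ∑ l : Fin n, α k * α l := by
      rw [sq, Finset.sum_mul_sum]
    have split : ∀ k l : Fin n, α k * α l =
        (if k < l then α k * α l else 0) + (if l < k then α k * α l else 0)
        + (if k = l then α k * α l else 0) := by
      intro k l
      rcases lt_trichotomy k l with h | h | h
      · simp [h, asymm h, h.ne]
      · simp [h, lt_irrefl]
      · simp [h, asymm h, h.ne']
    have hswap : (∑ k : Fin n, ∑ l : Fin n, if l < k then α k * α l else 0)
        = ∑ k : Fin n, ∑ l : Fin n, if k < l then α k * α l else 0 := by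
      rw [Finset.sum_comm]
      exact Finset.sum_congr rfl fun x _ => Finset.sum_congr rfl fun y _ => by
        rw [mul_comm]
    have hdiag : (∑ k : Fin n, ∑ l : Fin n, if k = l then α k * α l else 0)
        = ∑ k, α k ^ 2 := by
      simp [Finset.sum_ite_eq, sq]
    have := expand
    rw [Finset.sum_congr rfl fun k _ => Finset.sum_congr rfl fun l _ => split k l] at this
    simp only [Finset.sum_add_distrib] at this
    rw [hswap, hdiag] at this
    linarith
  have hPval : (∑ k : Fin n, ∑ l : Fin n, if k < l then α k * α l else 0)
      = ((∑ k, α k) ^ 2 - (∑ k, α k ^ 2)) / 2 := by linarith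
  -- the last sum in b
  have hW : ∀ x : Fin n → ℝ,
      (∑ k : Fin n, α k * ∑ l ∈ Finset.univ \ {k}, α l ^ 2 * x l ^ 2)
        = (∑ k, α k) * (∑ k, α k ^ 2 * x k ^ 2) - ∑ k, α k ^ 3 * x k ^ 2 := by
    intro x
    have hpt : ∀ k : Fin n, α k * ∑ l ∈ Finset.univ \ {k}, α l ^ 2 * x l ^ 2
        = α k * (∑ l, α l ^ 2 * x l ^ 2) - α k ^ 3 * x k ^ 2 := by
      intro k
      rw [hsub1]
      ring
    rw [Finset.sum_congr rfl fun k _ => hpt k, Finset.sum_sub_distrib, ← Finset.sum_mul]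
  constructor
  · intro j
    have key : ∀ i ∈ Finset.univ \ ({j} : Finset (Fin n)), a i j =
        1 / ((n : ℝ) - 2) * (α i ^ 2 + (((n : ℝ) - 2) * α j - ∑ k, α k) * α i
          + (α j ^ 2 - α j * (∑ k, α k)
             + 2 / ((n : ℝ) - 1) *
               ∑ k : Fin n, ∑ l : Fin n, if k < l then α k * α l else 0)) := by
      intro i hi
      have hij : i ≠ j := by
        simpa using (Finset.mem_sdiff.mp hi).2
      rw [ha, hsub2 α i j hij]
      ring
    rw [Finset.sum_congr rfl key, ← Finset.mul_sum, Finset.sum_add_distrib,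
      Finset.sum_add_distrib]
    simp only [← Finset.mul_sum]
    rw [Finset.sum_const, nsmul_eq_mul, hcard]
    simp only [hsub1]
    rw [hPval]
    field_simp
    ring
  · intro j x
    have key : ∀ i ∈ Finset.univ \ ({j} : Finset (Fin n)), b i j x =
        2 / (((n : ℝ) - 2) * r ^ 2) * (2 * (α i ^ 3 * x i ^ 2)
          + (((n : ℝ) - 2) * α j - ∑ k, α k) * (α i ^ 2 * x i ^ 2)
          + (((n : ℝ) - 2) * (α j ^ 2 * x j ^ 2) - ∑ k, α k ^ 2 * x k ^ 2) * α i
          + (-(∑ k, α k) * (α j ^ 2 * x j ^ 2) + 2 * (α j ^ 3 * x j ^ 2)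
             - α j * (∑ k, α k ^ 2 * x k ^ 2)
             + 2 / ((n : ℝ) - 1) *
               ((∑ k, α k) * (∑ k, α k ^ 2 * x k ^ 2) - ∑ k, α k ^ 3 * x k ^ 2))) := by
      intro i hi
      have hij : i ≠ j := by
        simpa using (Finset.mem_sdiff.mp hi).2
      rw [hb, hsub2 α i j hij, hsub2 (fun k => α k ^ 2 * x k ^ 2) i j hij, hW x]
      ring
    rw [Finset.sum_congr rfl key, ← Finset.mul_sum, Finset.sum_add_distrib,
      Finset.sum_add_distrib, Finset.sum_add_distrib]
    simp only [← Finset.mul_sum]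
    rw [Finset.sum_const, nsmul_eq_mul, hcard]
    simp only [hsub1]
    field_simp
    ring
end

section
/- A quadruple (x₁, x₂, x₃, x₄) ∈ ℝ⁴ satisfies the system 4x₁x₄ = −15x₂x₃, 9x₁x₃ = 10x₂x₄, 5x₁x₂ = −6x₃x₄ if and only if at most one of the coordinates x₁, x₂, x₃, x₄ is nonzero. -/
/-- A quadruple `(x₁, x₂, x₃, x₄) ∈ ℝ⁴` satisfies the system
`4x₁x₄ = −15x₂x₃`, `9x₁x₃ = 10x₂x₄`, `5x₁x₂ = −6x₃x₄`
if and only if at most one of the coordinates is nonzero. -/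
theorem selfdual_weyl_system_iff_at_most_one_nonzero (x₁ x₂ x₃ x₄ : ℝ) :
    (4 * x₁ * x₄ = -15 * x₂ * x₃ ∧
     9 * x₁ * x₃ = 10 * x₂ * x₄ ∧
     5 * x₁ * x₂ = -6 * x₃ * x₄) ↔
    ((x₂ = 0 ∧ x₃ = 0 ∧ x₄ = 0) ∨ (x₁ = 0 ∧ x₃ = 0 ∧ x₄ = 0) ∨
     (x₁ = 0 ∧ x₂ = 0 ∧ x₄ = 0) ∨ (x₁ = 0 ∧ x₂ = 0 ∧ x₃ = 0)) := by
  constructor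
  · rintro ⟨h1, h2, h3⟩
    have h12 : 36 * x₁^2 * (x₃*x₄) + 150 * x₂^2 * (x₃*x₄) = 0 := by
      linear_combination (9*x₁*x₃) * h1 - (15*x₂*x₃) * h2
    have h3sq : 25 * (x₁*x₂)^2 = 36 * (x₃*x₄)^2 := by
      linear_combination (5*x₁*x₂ - 6*x₃*x₄) * h3
    have hA : x₁ * x₂ = 0 := by
      have key : (x₁*x₂)^2 * (36 * x₁^2 + 150 * x₂^2) = 0 := by
        linear_combination (1/25)*(36*x₁^2+150*x₂^2)*h3sq + (36/25)*(x₃*x₄)*h12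
      rcases mul_eq_zero.mp key with h | h
      · exact pow_eq_zero_iff two_ne_zero |>.mp h
      · have hx1 : x₁ = 0 := by nlinarith [sq_nonneg x₁, sq_nonneg x₂]
        simp [hx1]
    have hB : x₃ * x₄ = 0 := by nlinarith
    rcases mul_eq_zero.mp hA with h1z | h2z
    · rcases mul_eq_zero.mp hB with h3z | h4z
      · -- x₁ = 0, x₃ = 0 : eq2 gives x₂x₄=0
        subst h1z; subst h3z
        have : x₂ * x₄ = 0 := by linarith [h2]
        rcases mul_eq_zero.mp this with h | h
        · tauto
        · tauto
      · -- x₁ = 0, x₄ = 0 : eq1 gives x₂x₃=0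
        subst h1z; subst h4z
        have : x₂ * x₃ = 0 := by nlinarith [h1]
        rcases mul_eq_zero.mp this with h | h
        · tauto
        · tauto
    · rcases mul_eq_zero.mp hB with h3z | h4z
      · -- x₂ = 0, x₃ = 0 : eq1 gives x₁x₄=0
        subst h2z; subst h3z
        have : x₁ * x₄ = 0 := by nlinarith [h1]
        rcases mul_eq_zero.mp this with h | h
        · tauto
        · tauto
      · -- x₂ = 0, x₄ = 0 : eq2 gives x₁x₃=0
        subst h2z; subst h4z
        have : x₁ * x₃ = 0 := by nlinarith [h2]
        rcases mul_eq_zero.mp this with h | h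
        · tauto
        · tauto
  · rintro (⟨a, b, c⟩ | ⟨a, b, c⟩ | ⟨a, b, c⟩ | ⟨a, b, c⟩) <;>
      subst a <;> subst b <;> subst c <;> refine ⟨by ring, by ring, by ring⟩
end

section
/- Let r > 0 and let A, B, C be real numbers with A ≠ 0, B ≠ 0, C ≠ 0. Then there is no (x₁, x₂, x₃, x₄) ∈ ℝ⁴ satisfying simultaneously the following ten equations. Off-diagonal equations: (1) x₁x₂·[(2/r²)(x₁² + (75/32)x₂² + (9/2)x₃² + 12x₄²)·C + (141/8)·B] = 0; (2) x₁x₃·[(2/r²)((1/4)x₁² + (75/64)x₂² + (45/16)x₃² + 9x₄²)·C + (189/16)·B] = 0; (3) x₁x₄·[(2/r²)((5/4)x₁² + (75/64)x₂² + (9/16)x₃² − 3x₄²)·C + (9/16)·B] = 0; (4) x₂x₃·[(2/r²)(−(1/2)x₁² + (9/8)x₃² + 6x₄²)·C + (19/4)·B] = 0; (5) x₂x₄·[(2/r²)(x₁² + (75/32)x₂² + (9/4)x₃²)·C + (73/8)·B] = 0; (6) x₃x₄·[(2/r²)((11/4)x₁² + (225/64)x₂² + (63/16)x₃² + 3x₄²)·C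 + (287/16)·B] = 0. Diagonal equations: (7) −(323/(12r²))·A + (1/(3r⁴))((7/2)x₁² − (4175/32)x₂² − (2727/16)x₃² − 217x₄²)·B + (8/(3r⁶))·[(x₁² + (25/16)x₂² + (9/4)x₃² + 4x₄²)(−(7/4)x₁² − (75/32)x₂² − (45/16)x₃² − 3x₄²) + x₁²((7/4)x₁² + (225/64)x₂² + (99/16)x₃² + 15x₄²)]·C = 0; (8) −(41/(6r²))·A + (1/r⁴)(−(97/6)x₁² + (75/24)x₂² − 21x₃² + (2/3)x₄²)·B + (1/(3r⁶))·[(8x₁² + (25/2)x₂² + 18x₃² + 32x₄²)(−x₁² − (75/64)x₂² − (9/8)x₃²) + x₂²((25/8)x₁² + (1875/128)x₂² + (1125/32)x₃² + (225/2)x₄²)]·C = 0; (9) (53/(6r²))·A + (1/r⁴)(−(43/12)x₁² + (25/24)x₂² + (39/8)x₃² + (209/3)x₄²)·B + (2/r⁶)·[((4/3)x₁² + (25/12)x₂² + 3x₃² + (16/3)x₄²)(−(1/4)x₁² + (9/16)x₃² + 3x₄²) + x₃²(−(15/4)x₁² − (225/64)x₂² − (27/16)x₃² + 9x₄²)]·C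 = 0; (10) (299/(12r²))·A + (1/r⁴)((223/12)x₁² + (3775/96)x₂² + (1167/16)x₃² + 2x₄²)·B + (8/(3r⁶))·[(x₁² + (25/16)x₂² + (9/4)x₃² + 4x₄²)((5/4)x₁² + (75/32)x₂² + (63/16)x₃² + 9x₄²) − x₄²(17x₁² + (375/16)x₂² + (117/4)x₃² + 36x₄²)]·C = 0. -/
/-!
Only `s = r²`, the squares `uᵢ = xᵢ²` and the products `xᵢ xⱼ` enter, and after clearing
denominators the equations are polynomial. On the support of `u`, each off-diagonal equation
whose two indices lie in the support becomes a linear relation `2 C L(u) + b B s = 0`. If three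
coordinates are nonzero, three such relations and the first three diagonal equations eliminate
`B` and every monomial in `u`, leaving `A s² = 0`. If exactly two are nonzero, their relation
eliminates `B`, and the diagonal equations then force `C uᵢ³ = 0`. If at most one is nonzero, the
diagonal equations alone give `A s² = 0`. Each case is a linear elimination over `ℚ`, so it holds
in any field of characteristic zero.
-/

section

variable {K : Type*} [Field K]

/-- With `s = r²` and `uᵢ = xᵢ²`, the fields are `r⁶` times the diagonal equations (7)–(9) and
`xᵢ xⱼ r²` times the off-diagonal equations. -/
structure ClearedBachSystem (A B C s u₁ u₂ u₃ u₄ : K) : Prop where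
  diag₁ : -(323 / 12) * A * s ^ 2 +
      1 / 3 * (7 / 2 * u₁ - 4175 / 32 * u₂ - 2727 / 16 * u₃ - 217 * u₄) * B * s +
      8 / 3 * ((u₁ + 25 / 16 * u₂ + 9 / 4 * u₃ + 4 * u₄) *
          (-(7 / 4) * u₁ - 75 / 32 * u₂ - 45 / 16 * u₃ - 3 * u₄) +
        u₁ * (7 / 4 * u₁ + 225 / 64 * u₂ + 99 / 16 * u₃ + 15 * u₄)) * C = 0
  diag₂ : -(41 / 6) * A * s ^ 2 +
      (-(97 / 6) * u₁ + 75 / 24 * u₂ - 21 * u₃ + 2 / 3 * u₄) * B * s +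
      1 / 3 * ((8 * u₁ + 25 / 2 * u₂ + 18 * u₃ + 32 * u₄) * (-u₁ - 75 / 64 * u₂ - 9 / 8 * u₃) +
        u₂ * (25 / 8 * u₁ + 1875 / 128 * u₂ + 1125 / 32 * u₃ + 225 / 2 * u₄)) * C = 0
  diag₃ : 53 / 6 * A * s ^ 2 +
      (-(43 / 12) * u₁ + 25 / 24 * u₂ + 39 / 8 * u₃ + 209 / 3 * u₄) * B * s +
      2 * ((4 / 3 * u₁ + 25 / 12 * u₂ + 3 * u₃ + 16 / 3 * u₄) *
          (-(1 / 4) * u₁ + 9 / 16 * u₃ + 3 * u₄) +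
        u₃ * (-(15 / 4) * u₁ - 225 / 64 * u₂ - 27 / 16 * u₃ + 9 * u₄)) * C = 0
  offDiag₁₂ : u₁ * u₂ *
      (2 * (u₁ + 75 / 32 * u₂ + 9 / 2 * u₃ + 12 * u₄) * C + 141 / 8 * B * s) = 0
  offDiag₁₃ : u₁ * u₃ *
      (2 * (1 / 4 * u₁ + 75 / 64 * u₂ + 45 / 16 * u₃ + 9 * u₄) * C + 189 / 16 * B * s) = 0
  offDiag₁₄ : u₁ * u₄ *
      (2 * (5 / 4 * u₁ + 75 / 64 * u₂ + 9 / 16 * u₃ - 3 * u₄) * C + 9 / 16 * B * s) = 0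
  offDiag₂₃ : u₂ * u₃ * (2 * (-(1 / 2) * u₁ + 9 / 8 * u₃ + 6 * u₄) * C + 19 / 4 * B * s) = 0
  offDiag₂₄ : u₂ * u₄ * (2 * (u₁ + 75 / 32 * u₂ + 9 / 4 * u₃) * C + 73 / 8 * B * s) = 0
  offDiag₃₄ : u₃ * u₄ *
      (2 * (11 / 4 * u₁ + 225 / 64 * u₂ + 63 / 16 * u₃ + 3 * u₄) * C + 287 / 16 * B * s) = 0

variable [CharZero K] {A B C s u₁ u₂ u₃ u₄ : K}

namespace ClearedBachSystem

theorem false_of_axis₁ (h : ClearedBachSystem A B C s u₁ 0 0 0)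
    (hA : A ≠ 0) (hs : s ≠ 0) : False := by
  obtain ⟨d₁, d₂, d₃, -⟩ := h
  grind

theorem false_of_axis₂ (h : ClearedBachSystem A B C s 0 u₂ 0 0)
    (hA : A ≠ 0) (hs : s ≠ 0) : False := by
  obtain ⟨-, d₂, d₃, -⟩ := h
  grind

theorem false_of_axis₃ (h : ClearedBachSystem A B C s 0 0 u₃ 0)
    (hA : A ≠ 0) (hs : s ≠ 0) : False := by
  obtain ⟨d₁, d₂, d₃, -⟩ := h
  grind

theorem false_of_axis₄ (h : ClearedBachSystem A B C s 0 0 0 u₄)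
    (hA : A ≠ 0) (hs : s ≠ 0) : False := by
  obtain ⟨d₁, d₂, d₃, -⟩ := h
  grind

theorem false_of_plane₁₂ (h : ClearedBachSystem A B C s u₁ u₂ 0 0)
    (hC : C ≠ 0) (h₁ : u₁ ≠ 0) (h₂ : u₂ ≠ 0) : False := by
  obtain ⟨d₁, d₂, d₃, k, -⟩ := h
  grind

theorem false_of_plane₁₃ (h : ClearedBachSystem A B C s u₁ 0 u₃ 0)
    (hC : C ≠ 0) (h₁ : u₁ ≠ 0) (h₃ : u₃ ≠ 0) : False := by
  obtain ⟨d₁, d₂, d₃, -, k, -⟩ := h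
  grind

theorem false_of_plane₁₄ (h : ClearedBachSystem A B C s u₁ 0 0 u₄)
    (hC : C ≠ 0) (h₁ : u₁ ≠ 0) (h₄ : u₄ ≠ 0) : False := by
  obtain ⟨d₁, d₂, d₃, -, -, k, -⟩ := h
  grind

theorem false_of_plane₂₃ (h : ClearedBachSystem A B C s 0 u₂ u₃ 0)
    (hC : C ≠ 0) (h₂ : u₂ ≠ 0) (h₃ : u₃ ≠ 0) : False := by
  obtain ⟨d₁, d₂, d₃, -, -, -, k, -⟩ := h
  grind

theorem false_of_plane₂₄ (h : ClearedBachSystem A B C s 0 u₂ 0 u₄)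
    (hC : C ≠ 0) (h₂ : u₂ ≠ 0) (h₄ : u₄ ≠ 0) : False := by
  obtain ⟨d₁, d₂, d₃, -, -, -, -, k, -⟩ := h
  grind

theorem false_of_plane₃₄ (h : ClearedBachSystem A B C s 0 0 u₃ u₄)
    (hC : C ≠ 0) (h₃ : u₃ ≠ 0) (h₄ : u₄ ≠ 0) : False := by
  obtain ⟨d₁, d₂, d₃, -, -, -, -, -, k⟩ := h
  grind

theorem false_of_ne_zero₁₂₃ (h : ClearedBachSystem A B C s u₁ u₂ u₃ u₄)
    (hA : A ≠ 0) (hs : s ≠ 0) (h₁ : u₁ ≠ 0) (h₂ : u₂ ≠ 0) (h₃ : u₃ ≠ 0) : False := by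
  obtain ⟨d₁, d₂, d₃, k₁₂, k₁₃, -, k₂₃, -⟩ := h
  grind

theorem false_of_ne_zero₁₂₄ (h : ClearedBachSystem A B C s u₁ u₂ u₃ u₄)
    (hA : A ≠ 0) (hs : s ≠ 0) (h₁ : u₁ ≠ 0) (h₂ : u₂ ≠ 0) (h₄ : u₄ ≠ 0) : False := by
  obtain ⟨d₁, d₂, d₃, k₁₂, -, k₁₄, -, k₂₄, -⟩ := h
  grind

theorem false_of_ne_zero₁₃₄ (h : ClearedBachSystem A B C s u₁ u₂ u₃ u₄)
    (hA : A ≠ 0) (hs : s ≠ 0) (h₁ : u₁ ≠ 0) (h₃ : u₃ ≠ 0) (h₄ : u₄ ≠ 0) : False := by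
  obtain ⟨d₁, d₂, d₃, -, k₁₃, k₁₄, -, -, k₃₄⟩ := h
  grind

theorem false_of_ne_zero₂₃₄ (h : ClearedBachSystem A B C s u₁ u₂ u₃ u₄)
    (hA : A ≠ 0) (hs : s ≠ 0) (h₂ : u₂ ≠ 0) (h₃ : u₃ ≠ 0) (h₄ : u₄ ≠ 0) : False := by
  obtain ⟨d₁, d₂, d₃, -, -, -, k₂₃, k₂₄, k₃₄⟩ := h
  grind

end ClearedBachSystem

theorem not_clearedBachSystem (hA : A ≠ 0) (hC : C ≠ 0) (hs : s ≠ 0) :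
    ¬ ClearedBachSystem A B C s u₁ u₂ u₃ u₄ := by
  intro h
  rcases eq_or_ne u₁ 0 with rfl | h₁ <;> rcases eq_or_ne u₂ 0 with rfl | h₂ <;>
    rcases eq_or_ne u₃ 0 with rfl | h₃ <;> rcases eq_or_ne u₄ 0 with rfl | h₄
  · exact h.false_of_axis₁ hA hs
  · exact h.false_of_axis₄ hA hs
  · exact h.false_of_axis₃ hA hs
  · exact h.false_of_plane₃₄ hC h₃ h₄
  · exact h.false_of_axis₂ hA hs
  · exact h.false_of_plane₂₄ hC h₂ h₄
  · exact h.false_of_plane₂₃ hC h₂ h₃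
  · exact h.false_of_ne_zero₂₃₄ hA hs h₂ h₃ h₄
  · exact h.false_of_axis₁ hA hs
  · exact h.false_of_plane₁₄ hC h₁ h₄
  · exact h.false_of_plane₁₃ hC h₁ h₃
  · exact h.false_of_ne_zero₁₃₄ hA hs h₁ h₃ h₄
  · exact h.false_of_plane₁₂ hC h₁ h₂
  · exact h.false_of_ne_zero₁₂₄ hA hs h₁ h₂ h₄
  · exact h.false_of_ne_zero₁₂₃ hA hs h₁ h₂ h₃
  · exact h.false_of_ne_zero₁₂₃ hA hs h₁ h₂ h₃

end

theorem bach_system_no_real_solution_general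
    (r A B C : ℝ) (hr : 0 < r) (hA : A ≠ 0) (hC : C ≠ 0) :
    ¬ ∃ x₁ x₂ x₃ x₄ : ℝ,
      -- off-diagonal equations
      x₁ * x₂ * (2 / r ^ 2 * (x₁ ^ 2 + 75 / 32 * x₂ ^ 2 + 9 / 2 * x₃ ^ 2 +
        12 * x₄ ^ 2) * C + 141 / 8 * B) = 0 ∧
      x₁ * x₃ * (2 / r ^ 2 * (1 / 4 * x₁ ^ 2 + 75 / 64 * x₂ ^ 2 + 45 / 16 * x₃ ^ 2 +
        9 * x₄ ^ 2) * C + 189 / 16 * B) = 0 ∧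
      x₁ * x₄ * (2 / r ^ 2 * (5 / 4 * x₁ ^ 2 + 75 / 64 * x₂ ^ 2 + 9 / 16 * x₃ ^ 2 -
        3 * x₄ ^ 2) * C + 9 / 16 * B) = 0 ∧
      x₂ * x₃ * (2 / r ^ 2 * (-(1 / 2) * x₁ ^ 2 + 9 / 8 * x₃ ^ 2 +
        6 * x₄ ^ 2) * C + 19 / 4 * B) = 0 ∧
      x₂ * x₄ * (2 / r ^ 2 * (x₁ ^ 2 + 75 / 32 * x₂ ^ 2 + 9 / 4 * x₃ ^ 2) * C +
        73 / 8 * B) = 0 ∧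
      x₃ * x₄ * (2 / r ^ 2 * (11 / 4 * x₁ ^ 2 + 225 / 64 * x₂ ^ 2 + 63 / 16 * x₃ ^ 2 +
        3 * x₄ ^ 2) * C + 287 / 16 * B) = 0 ∧
      -- diagonal equations
      (-(323 / (12 * r ^ 2)) * A +
        1 / (3 * r ^ 4) * (7 / 2 * x₁ ^ 2 - 4175 / 32 * x₂ ^ 2 - 2727 / 16 * x₃ ^ 2 -
          217 * x₄ ^ 2) * B +
        8 / (3 * r ^ 6) *
          ((x₁ ^ 2 + 25 / 16 * x₂ ^ 2 + 9 / 4 * x₃ ^ 2 + 4 * x₄ ^ 2) *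
            (-(7 / 4) * x₁ ^ 2 - 75 / 32 * x₂ ^ 2 - 45 / 16 * x₃ ^ 2 - 3 * x₄ ^ 2) +
           x₁ ^ 2 * (7 / 4 * x₁ ^ 2 + 225 / 64 * x₂ ^ 2 + 99 / 16 * x₃ ^ 2 +
            15 * x₄ ^ 2)) * C = 0) ∧
      (-(41 / (6 * r ^ 2)) * A +
        1 / r ^ 4 * (-(97 / 6) * x₁ ^ 2 + 75 / 24 * x₂ ^ 2 - 21 * x₃ ^ 2 +
          2 / 3 * x₄ ^ 2) * B +
        1 / (3 * r ^ 6) *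
          ((8 * x₁ ^ 2 + 25 / 2 * x₂ ^ 2 + 18 * x₃ ^ 2 + 32 * x₄ ^ 2) *
            (-x₁ ^ 2 - 75 / 64 * x₂ ^ 2 - 9 / 8 * x₃ ^ 2) +
           x₂ ^ 2 * (25 / 8 * x₁ ^ 2 + 1875 / 128 * x₂ ^ 2 + 1125 / 32 * x₃ ^ 2 +
            225 / 2 * x₄ ^ 2)) * C = 0) ∧
      (53 / (6 * r ^ 2) * A +
        1 / r ^ 4 * (-(43 / 12) * x₁ ^ 2 + 25 / 24 * x₂ ^ 2 + 39 / 8 * x₃ ^ 2 +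
          209 / 3 * x₄ ^ 2) * B +
        2 / r ^ 6 *
          ((4 / 3 * x₁ ^ 2 + 25 / 12 * x₂ ^ 2 + 3 * x₃ ^ 2 + 16 / 3 * x₄ ^ 2) *
            (-(1 / 4) * x₁ ^ 2 + 9 / 16 * x₃ ^ 2 + 3 * x₄ ^ 2) +
           x₃ ^ 2 * (-(15 / 4) * x₁ ^ 2 - 225 / 64 * x₂ ^ 2 - 27 / 16 * x₃ ^ 2 +
            9 * x₄ ^ 2)) * C = 0) ∧
      (299 / (12 * r ^ 2) * A +
        1 / r ^ 4 * (223 / 12 * x₁ ^ 2 + 3775 / 96 * x₂ ^ 2 + 1167 / 16 * x₃ ^ 2 +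
          2 * x₄ ^ 2) * B +
        8 / (3 * r ^ 6) *
          ((x₁ ^ 2 + 25 / 16 * x₂ ^ 2 + 9 / 4 * x₃ ^ 2 + 4 * x₄ ^ 2) *
            (5 / 4 * x₁ ^ 2 + 75 / 32 * x₂ ^ 2 + 63 / 16 * x₃ ^ 2 + 9 * x₄ ^ 2) -
           x₄ ^ 2 * (17 * x₁ ^ 2 + 375 / 16 * x₂ ^ 2 + 117 / 4 * x₃ ^ 2 +
            36 * x₄ ^ 2)) * C = 0) := by
  rintro ⟨x₁, x₂, x₃, x₄, h₁₂, h₁₃, h₁₄, h₂₃, h₂₄, h₃₄, h₁, h₂, h₃, -⟩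
  have hr₀ : r ≠ 0 := hr.ne'
  refine not_clearedBachSystem (B := B) (u₁ := x₁ ^ 2) (u₂ := x₂ ^ 2) (u₃ := x₃ ^ 2)
    (u₄ := x₄ ^ 2) hA hC (pow_ne_zero 2 hr₀) ⟨?_, ?_, ?_, ?_, ?_, ?_, ?_, ?_, ?_⟩
  · linear_combination (norm := (field_simp; ring)) r ^ 6 * h₁
  · linear_combination (norm := (field_simp; ring)) r ^ 6 * h₂
  · linear_combination (norm := (field_simp; ring)) r ^ 6 * h₃
  · linear_combination (norm := (field_simp; ring)) x₁ * x₂ * r ^ 2 * h₁₂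
  · linear_combination (norm := (field_simp; ring)) x₁ * x₃ * r ^ 2 * h₁₃
  · linear_combination (norm := (field_simp; ring)) x₁ * x₄ * r ^ 2 * h₁₄
  · linear_combination (norm := (field_simp; ring)) x₂ * x₃ * r ^ 2 * h₂₃
  · linear_combination (norm := (field_simp; ring)) x₂ * x₄ * r ^ 2 * h₂₄
  · linear_combination (norm := (field_simp; ring)) x₃ * x₄ * r ^ 2 * h₃₄

/-- The homogeneous Bach-tensor system: for `r > 0` and nonzero reals `A, B, C`,
the ten polynomial equations obtained by setting the components of the deformed Bach
tensor to zero (with `(α₁, α₂, α₃, α₄) = (1, 5/4, 3/2, 2)`) admit no real solution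
`(x₁, x₂, x₃, x₄)`. -/
theorem bach_system_no_real_solution
    (r A B C : ℝ) (hr : 0 < r) (hA : A ≠ 0) (hB : B ≠ 0) (hC : C ≠ 0) :
    ¬ ∃ x₁ x₂ x₃ x₄ : ℝ,
      -- off-diagonal equations
      x₁ * x₂ * (2 / r ^ 2 * (x₁ ^ 2 + 75 / 32 * x₂ ^ 2 + 9 / 2 * x₃ ^ 2 +
        12 * x₄ ^ 2) * C + 141 / 8 * B) = 0 ∧
      x₁ * x₃ * (2 / r ^ 2 * (1 / 4 * x₁ ^ 2 + 75 / 64 * x₂ ^ 2 + 45 / 16 * x₃ ^ 2 +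
        9 * x₄ ^ 2) * C + 189 / 16 * B) = 0 ∧
      x₁ * x₄ * (2 / r ^ 2 * (5 / 4 * x₁ ^ 2 + 75 / 64 * x₂ ^ 2 + 9 / 16 * x₃ ^ 2 -
        3 * x₄ ^ 2) * C + 9 / 16 * B) = 0 ∧
      x₂ * x₃ * (2 / r ^ 2 * (-(1 / 2) * x₁ ^ 2 + 9 / 8 * x₃ ^ 2 +
        6 * x₄ ^ 2) * C + 19 / 4 * B) = 0 ∧
      x₂ * x₄ * (2 / r ^ 2 * (x₁ ^ 2 + 75 / 32 * x₂ ^ 2 + 9 / 4 * x₃ ^ 2) * C +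
        73 / 8 * B) = 0 ∧
      x₃ * x₄ * (2 / r ^ 2 * (11 / 4 * x₁ ^ 2 + 225 / 64 * x₂ ^ 2 + 63 / 16 * x₃ ^ 2 +
        3 * x₄ ^ 2) * C + 287 / 16 * B) = 0 ∧
      -- diagonal equations
      (-(323 / (12 * r ^ 2)) * A +
        1 / (3 * r ^ 4) * (7 / 2 * x₁ ^ 2 - 4175 / 32 * x₂ ^ 2 - 2727 / 16 * x₃ ^ 2 -
          217 * x₄ ^ 2) * B +
        8 / (3 * r ^ 6) *
          ((x₁ ^ 2 + 25 / 16 * x₂ ^ 2 + 9 / 4 * x₃ ^ 2 + 4 * x₄ ^ 2) *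
            (-(7 / 4) * x₁ ^ 2 - 75 / 32 * x₂ ^ 2 - 45 / 16 * x₃ ^ 2 - 3 * x₄ ^ 2) +
           x₁ ^ 2 * (7 / 4 * x₁ ^ 2 + 225 / 64 * x₂ ^ 2 + 99 / 16 * x₃ ^ 2 +
            15 * x₄ ^ 2)) * C = 0) ∧
      (-(41 / (6 * r ^ 2)) * A +
        1 / r ^ 4 * (-(97 / 6) * x₁ ^ 2 + 75 / 24 * x₂ ^ 2 - 21 * x₃ ^ 2 +
          2 / 3 * x₄ ^ 2) * B +
        1 / (3 * r ^ 6) *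
          ((8 * x₁ ^ 2 + 25 / 2 * x₂ ^ 2 + 18 * x₃ ^ 2 + 32 * x₄ ^ 2) *
            (-x₁ ^ 2 - 75 / 64 * x₂ ^ 2 - 9 / 8 * x₃ ^ 2) +
           x₂ ^ 2 * (25 / 8 * x₁ ^ 2 + 1875 / 128 * x₂ ^ 2 + 1125 / 32 * x₃ ^ 2 +
            225 / 2 * x₄ ^ 2)) * C = 0) ∧
      (53 / (6 * r ^ 2) * A +
        1 / r ^ 4 * (-(43 / 12) * x₁ ^ 2 + 25 / 24 * x₂ ^ 2 + 39 / 8 * x₃ ^ 2 +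
          209 / 3 * x₄ ^ 2) * B +
        2 / r ^ 6 *
          ((4 / 3 * x₁ ^ 2 + 25 / 12 * x₂ ^ 2 + 3 * x₃ ^ 2 + 16 / 3 * x₄ ^ 2) *
            (-(1 / 4) * x₁ ^ 2 + 9 / 16 * x₃ ^ 2 + 3 * x₄ ^ 2) +
           x₃ ^ 2 * (-(15 / 4) * x₁ ^ 2 - 225 / 64 * x₂ ^ 2 - 27 / 16 * x₃ ^ 2 +
            9 * x₄ ^ 2)) * C = 0) ∧
      (299 / (12 * r ^ 2) * A +
        1 / r ^ 4 * (223 / 12 * x₁ ^ 2 + 3775 / 96 * x₂ ^ 2 + 1167 / 16 * x₃ ^ 2 +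
          2 * x₄ ^ 2) * B +
        8 / (3 * r ^ 6) *
          ((x₁ ^ 2 + 25 / 16 * x₂ ^ 2 + 9 / 4 * x₃ ^ 2 + 4 * x₄ ^ 2) *
            (5 / 4 * x₁ ^ 2 + 75 / 32 * x₂ ^ 2 + 63 / 16 * x₃ ^ 2 + 9 * x₄ ^ 2) -
           x₄ ^ 2 * (17 * x₁ ^ 2 + 375 / 16 * x₂ ^ 2 + 117 / 4 * x₃ ^ 2 +
            36 * x₄ ^ 2)) * C = 0) :=
  bach_system_no_real_solution_general r A B C hr hA hC
end
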